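/- Let Q be a left quasigroup and α a congruence of Q with α ≤ ζ_Q. Then Dis_α is contained in the center of Dis(Q), and the pointwise stabilizers satisfy Dis(Q)_x = Dis(Q)_y whenever x α y. -/

import Mathlib

namespace PaperLQ

/-- A left quasigroup `(Q, ⬝, \)`: `x ⬝ (x \ y) = y = x \ (x ⬝ y)`. -/
structure LeftQuasigroup (Q : Type*) where
  mul : Q → Q → Q
  ldiv : Q → Q → Q
  mul_ldiv : ∀ x y, mul x (ldiv x y) = y
  ldiv_mul : ∀ x y, ldiv x (mul x y) = y

namespace LeftQuasigroup

variable {Q : Type*}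

/-- The left translation `L_x : y ↦ x ⬝ y`, as a permutation of `Q`. -/
def L (S : LeftQuasigroup Q) (x : Q) : Equiv.Perm Q where
  toFun := S.mul x
  invFun := S.ldiv x
  left_inv := S.ldiv_mul x
  right_inv := S.mul_ldiv x

/-- The left multiplication group `LMlt(Q) = ⟨L_x : x ∈ Q⟩`. -/
def LMlt (S : LeftQuasigroup Q) : Subgroup (Equiv.Perm Q) :=
  Subgroup.closure (Set.range S.L)

/-- The displacement group `Dis(Q) = ⟨L_x L_y⁻¹ : x, y ∈ Q⟩`. -/
def Dis (S : LeftQuasigroup Q) : Subgroup (Equiv.Perm Q) :=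
  Subgroup.closure {g : Equiv.Perm Q | ∃ x y : Q, g = S.L x * (S.L y)⁻¹}

/-- The orbit equivalence `O_N` of a subgroup `N`: `x O_N y` iff `x = h y` for some `h ∈ N`. -/
def orbRel (N : Subgroup (Equiv.Perm Q)) : Setoid Q where
  r x y := ∃ h ∈ N, x = h y
  iseqv := by
    constructor
    · exact fun x => ⟨1, N.one_mem, rfl⟩
    · rintro x y ⟨h, hh, rfl⟩
      exact ⟨h⁻¹, N.inv_mem hh, (Equiv.symm_apply_apply h y).symm⟩
    · rintro x y z ⟨h, hh, rfl⟩ ⟨k, hk, rfl⟩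
      exact ⟨h * k, N.mul_mem hh hk, (Equiv.Perm.mul_apply h k z).symm⟩

/-- The equivalence `c_N`: `x c_N y` iff `L_x L_y⁻¹ ∈ N`. -/
def cRel (S : LeftQuasigroup Q) (N : Subgroup (Equiv.Perm Q)) : Setoid Q where
  r x y := S.L x * (S.L y)⁻¹ ∈ N
  iseqv := by
    constructor
    · intro x; simpa using N.one_mem
    · intro x y h; simpa [mul_inv_rev] using N.inv_mem h
    · intro x y z h h'; simpa [mul_assoc] using N.mul_mem h h'

/-- The Cayley kernel `λ_Q`: `x λ_Q y` iff `L_x = L_y`. -/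
def cayley (S : LeftQuasigroup Q) : Setoid Q where
  r x y := S.L x = S.L y
  iseqv := ⟨fun _ => rfl, Eq.symm, Eq.trans⟩

/-- `α` is a congruence of the left quasigroup. -/
def IsCongruence (S : LeftQuasigroup Q) (α : Setoid Q) : Prop :=
  ∀ ⦃x y z t : Q⦄, α.r x z → α.r y t →
    α.r (S.mul x y) (S.mul z t) ∧ α.r (S.ldiv x y) (S.ldiv z t)

/-- The relative displacement group `Dis_α = ⟨h L_x L_y⁻¹ h⁻¹ : x α y, h ∈ LMlt(Q)⟩`. -/
def disRel (S : LeftQuasigroup Q) (α : Setoid Q) : Subgroup (Equiv.Perm Q) :=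
  Subgroup.closure
    {g : Equiv.Perm Q | ∃ x y h, α.r x y ∧ h ∈ S.LMlt ∧ g = h * (S.L x * (S.L y)⁻¹) * h⁻¹}

/-- The subgroup of permutations moving every point inside its `α`-class. -/
def apprSub (α : Setoid Q) : Subgroup (Equiv.Perm Q) where
  carrier := {h : Equiv.Perm Q | ∀ x : Q, α.r (h x) x}
  one_mem' := fun x => by
    simpa using α.iseqv.refl x
  mul_mem' := fun {a b} ha hb x => by
    rw [Equiv.Perm.mul_apply]
    exact α.iseqv.trans (ha (b x)) (hb x)
  inv_mem' := fun {a} ha x => by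
    have h := ha (a⁻¹ x)
    rw [show a (a⁻¹ x) = x from Equiv.apply_symm_apply a x] at h
    exact α.iseqv.symm h

/-- The group `Dis^α = {h ∈ Dis(Q) : h(x) α x for all x}`. -/
def disCo (S : LeftQuasigroup Q) (α : Setoid Q) : Subgroup (Equiv.Perm Q) :=
  S.Dis ⊓ apprSub α

/-- `N ∈ Norm'(Q)`: a normal subgroup of `LMlt(Q)` with `N ≤ Dis(Q)` and `O_N ≤ c_N`. -/
def MemNorm' (S : LeftQuasigroup Q) (N : Subgroup (Equiv.Perm Q)) : Prop :=
  N ≤ S.Dis ∧ (∀ h ∈ S.LMlt, ∀ n ∈ N, h * n * h⁻¹ ∈ N) ∧ orbRel N ≤ S.cRel N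

/-- The quotient left quasigroup `Q/α` for a congruence `α`. -/
def quot (S : LeftQuasigroup Q) (α : Setoid Q) (hα : S.IsCongruence α) :
    LeftQuasigroup (Quotient α) where
  mul := Quotient.lift₂ (fun x y => Quotient.mk α (S.mul x y))
    (fun _ _ _ _ h h' => Quotient.sound (hα h h').1)
  ldiv := Quotient.lift₂ (fun x y => Quotient.mk α (S.ldiv x y))
    (fun _ _ _ _ h h' => Quotient.sound (hα h h').2)
  mul_ldiv := fun a b => Quotient.inductionOn₂ a b fun x y => by
    show Quotient.mk α (S.mul x (S.ldiv x y)) = Quotient.mk α y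
    rw [S.mul_ldiv]
  ldiv_mul := fun a b => Quotient.inductionOn₂ a b fun x y => by
    show Quotient.mk α (S.ldiv x (S.mul x y)) = Quotient.mk α y
    rw [S.ldiv_mul]

/-- The image `π_α(N)` of a subgroup `N ≤ LMlt(Q)` in `Sym(Q/α)`: the permutations of
`Q/α` induced by some element of `N`. -/
def pushSub (α : Setoid Q) (N : Subgroup (Equiv.Perm Q)) :
    Subgroup (Equiv.Perm (Quotient α)) where
  carrier := {g | ∃ h ∈ N, ∀ x : Q, g (Quotient.mk α x) = Quotient.mk α (h x)}
  one_mem' := ⟨1, N.one_mem, fun x => rfl⟩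
  mul_mem' := fun {g₁ g₂} h₁ h₂ => by
    obtain ⟨k₁, hk₁, e₁⟩ := h₁
    obtain ⟨k₂, hk₂, e₂⟩ := h₂
    exact ⟨k₁ * k₂, N.mul_mem hk₁ hk₂, fun x => by
      rw [Equiv.Perm.mul_apply, Equiv.Perm.mul_apply, e₂ x, e₁ (k₂ x)]⟩
  inv_mem' := fun {g} h => by
    obtain ⟨k, hk, e⟩ := h
    refine ⟨k⁻¹, N.inv_mem hk, fun x => ?_⟩
    have h' := e (k⁻¹ x)
    rw [show k (k⁻¹ x) = x from Equiv.apply_symm_apply k x] at h'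
    rw [← h', show g⁻¹ (g ⟦k⁻¹ x⟧) = ⟦k⁻¹ x⟧ from Equiv.symm_apply_apply g _]

/-- `Q` is faithful if the Cayley kernel is trivial. -/
def Faithful (S : LeftQuasigroup Q) : Prop := S.cayley = ⊥

/-- `Q` is sharp: whenever `α ≤ β` are congruences with `β/α ≤ λ_{Q/α}`, then `α = β`. -/
def Sharp (S : LeftQuasigroup Q) : Prop :=
  ∀ (α β : Setoid Q) (hα : S.IsCongruence α), S.IsCongruence β → α ≤ β →
    (∀ x y : Q, β.r x y →
      (S.quot α hα).L (Quotient.mk α x) = (S.quot α hα).L (Quotient.mk α y)) →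
    α = β

/-- `Q` has congruences determined by orbits: `Dis^* : Con(Q) → Norm'(Q)` and
`O_* : Norm'(Q) → Con(Q)` are mutually inverse isomorphisms. -/
def CDOs (S : LeftQuasigroup Q) : Prop :=
  (∀ α : Setoid Q, S.IsCongruence α → orbRel (S.disCo α) = α) ∧
  (∀ N : Subgroup (Equiv.Perm Q), S.MemNorm' N → S.disCo (orbRel N) = N)

/-- `Q` has congruences determined by subgroups: `Dis_* : Con(Q) → Norm'(Q)` and
`c_* : Norm'(Q) → Con(Q)` are mutually inverse isomorphisms. -/
def CDSg (S : LeftQuasigroup Q) : Prop :=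
  (∀ α : Setoid Q, S.IsCongruence α → S.cRel (S.disRel α) = α) ∧
  (∀ N : Subgroup (Equiv.Perm Q), S.MemNorm' N → S.disRel (S.cRel N) = N)

/-- `Q` is connected: `LMlt(Q)` acts transitively. -/
def Connected (S : LeftQuasigroup Q) : Prop :=
  ∀ x y : Q, ∃ h ∈ S.LMlt, x = h y

/-- The subalgebra structure on a subset closed under `⬝` and `\`. -/
def sub (S : LeftQuasigroup Q) (T : Set Q)
    (hm : ∀ ⦃x⦄, x ∈ T → ∀ ⦃y⦄, y ∈ T → S.mul x y ∈ T)
    (hd : ∀ ⦃x⦄, x ∈ T → ∀ ⦃y⦄, y ∈ T → S.ldiv x y ∈ T) : LeftQuasigroup T where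
  mul a b := ⟨S.mul a b, hm a.2 b.2⟩
  ldiv a b := ⟨S.ldiv a b, hd a.2 b.2⟩
  mul_ldiv a b := Subtype.ext (S.mul_ldiv a b)
  ldiv_mul a b := Subtype.ext (S.ldiv_mul a b)

/-- `Q` is superconnected: every subalgebra is connected. -/
def Superconnected (S : LeftQuasigroup Q) : Prop :=
  ∀ (T : Set Q) (hm : ∀ ⦃x⦄, x ∈ T → ∀ ⦃y⦄, y ∈ T → S.mul x y ∈ T)
    (hd : ∀ ⦃x⦄, x ∈ T → ∀ ⦃y⦄, y ∈ T → S.ldiv x y ∈ T),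
    (S.sub T hm hd).Connected

/-- `Q` is idempotent: `x ⬝ x = x`. -/
def Idempotent (S : LeftQuasigroup Q) : Prop := ∀ x : Q, S.mul x x = x

/-- `Q` is latin: all right translations are bijective. -/
def Latin (S : LeftQuasigroup Q) : Prop :=
  ∀ x : Q, Function.Bijective fun y => S.mul y x

/-- `Q` is semiregular: the stabilizer of any point in `Dis(Q)` is trivial. -/
def Semiregular (S : LeftQuasigroup Q) : Prop :=
  ∀ x : Q, ∀ h ∈ S.Dis, h x = x → h = 1

/-- The term operations of a left quasigroup: the clone generated by `⬝` and `\`. -/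
inductive IsTermOp (S : LeftQuasigroup Q) : {n : ℕ} → ((Fin n → Q) → Q) → Prop
  | proj {n : ℕ} (i : Fin n) : IsTermOp S fun v => v i
  | mul {n : ℕ} {t s : (Fin n → Q) → Q} :
      IsTermOp S t → IsTermOp S s → IsTermOp S fun v => S.mul (t v) (s v)
  | ldiv {n : ℕ} {t s : (Fin n → Q) → Q} :
      IsTermOp S t → IsTermOp S s → IsTermOp S fun v => S.ldiv (t v) (s v)

/-- The centrality relation `C(α, β; δ)` of commutator theory. -/
def Centralizes (S : LeftQuasigroup Q) (α β δ : Setoid Q) : Prop :=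
  ∀ (n : ℕ) (t : (Fin (n + 1) → Q) → Q), S.IsTermOp t →
    ∀ x y : Q, α.r x y → ∀ z u : Fin n → Q, (∀ i, β.r (z i) (u i)) →
      δ.r (t (Fin.cons x z)) (t (Fin.cons x u)) →
      δ.r (t (Fin.cons y z)) (t (Fin.cons y u))

/-- The center `ζ_Q`: the largest central congruence. -/
def center (S : LeftQuasigroup Q) : Setoid Q :=
  sSup {β : Setoid Q | S.IsCongruence β ∧ S.Centralizes β ⊤ ⊥}

/-- The upper central series: `ζ_0 = 0_Q` and `ζ_{n+1}/ζ_n = ζ_{Q/ζ_n}`. -/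
def zeta (S : LeftQuasigroup Q) : ℕ → Setoid Q
  | 0 => ⊥
  | n + 1 =>
      sSup {β : Setoid Q | S.IsCongruence β ∧ S.zeta n ≤ β ∧ S.Centralizes β ⊤ (S.zeta n)}

/-- `Q` is nilpotent: the upper central series reaches `1_Q`. -/
def Nilpotent (S : LeftQuasigroup Q) : Prop := ∃ n : ℕ, S.zeta n = ⊤

/-- The variety generated by `Q` has a Malt'sev term. -/
def Maltsev (S : LeftQuasigroup Q) : Prop :=
  ∃ m : Q → Q → Q → Q,
    S.IsTermOp (n := 3) (fun v => m (v 0) (v 1) (v 2)) ∧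
    ∀ x y : Q, m x y y = x ∧ m y y x = x

/-- The central extension `E = Aff(Q, A, g, f, θ)` of `Q` by an abelian group `A`. -/
def affExt (S : LeftQuasigroup Q) (A : Type*) [AddCommGroup A]
    (g : A →+ A) (f : AddAut A) (θ : Q → Q → A) : LeftQuasigroup (Q × A) where
  mul p q := (S.mul p.1 q.1, g p.2 + f q.2 + θ p.1 q.1)
  ldiv p q := (S.ldiv p.1 q.1, f.symm (q.2 - g p.2 - θ p.1 (S.ldiv p.1 q.1)))
  mul_ldiv := by
    rintro ⟨x, a⟩ ⟨y, b⟩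
    dsimp only
    rw [S.mul_ldiv, AddEquiv.apply_symm_apply]
    refine Prod.ext rfl ?_
    dsimp only
    abel
  ldiv_mul := by
    rintro ⟨x, a⟩ ⟨y, b⟩
    dsimp only
    rw [S.ldiv_mul]
    refine Prod.ext rfl ?_
    dsimp only
    have h : g a + f b + θ x y - g a - θ x y = f b := by abel
    rw [h, AddEquiv.symm_apply_apply]

/-- The affine left quasigroup `Aff(A, g, f, c)`: `a ⬝ b = g(a) + f(b) + c`. -/
def affine {A : Type*} [AddCommGroup A] (g : A →+ A) (f : AddAut A) (c : A) :
    LeftQuasigroup A where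
  mul a b := g a + f b + c
  ldiv a b := f.symm (b - g a - c)
  mul_ldiv := by
    intro a b
    rw [AddEquiv.apply_symm_apply]
    abel
  ldiv_mul := by
    intro a b
    have h : g a + f b + c - g a - c = f b := by abel
    rw [h, AddEquiv.symm_apply_apply]

/-- The relation `α_N` on `Q × A`: `(x,a) α_N (y,b)` iff `x = y` and `a - b ∈ N`. -/
def prodCongr (Q : Type*) {A : Type*} [AddCommGroup A] (N : AddSubgroup A) :
    Setoid (Q × A) where
  r p q := p.1 = q.1 ∧ p.2 - q.2 ∈ N
  iseqv := by
    constructor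
    · exact fun p => ⟨rfl, by simpa using N.zero_mem⟩
    · rintro p q ⟨h1, h2⟩
      exact ⟨h1.symm, by simpa using N.neg_mem h2⟩
    · rintro p q r ⟨h1, h2⟩ ⟨h1', h2'⟩
      exact ⟨h1.trans h1', by simpa [sub_add_sub_cancel] using N.add_mem h2 h2'⟩

/-!
Every element of `LMlt(Q)` is a word in left translations, hence the value `P a` of a family of
permutations `P` for which `(a, q) ↦ P a q` is a term operation; for an element of `Dis(Q)` the
word can be chosen with exponent sum zero, so that `P` is the identity at constant parameter
tuples. If `h = P a ∈ Dis(Q)` fixes `x` and `x α y`, the term `t(w, a) = P a w` satisfies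
`t(x, a) = x = t(x, (x, …, x))`, and the term condition `C(α, 1; 0)` turns this into
`h y = t(y, a) = t(y, (x, …, x)) = y`. Centrality of `Dis_α` is the same argument applied to the
commutator of `h L_x L_w⁻¹ h⁻¹` and `k ∈ Dis(Q)`, read as a family in `w` and the parameters of
`h` and `k`: it is trivial at `w = x`, and also at `w = y` when the parameters of `k` are made
constant. Finally `C(ζ_Q, 1; 0)` holds because the term condition in the first variable is
preserved under joins of equivalence relations.
-/

section

variable (S : LeftQuasigroup Q)

theorem centralizes_sSup {s : Set (Setoid Q)} {β δ : Setoid Q}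
    (hs : ∀ α ∈ s, S.Centralizes α β δ) : S.Centralizes (sSup s) β δ := by
  -- `Setoid.ker test` relates the points satisfying the term condition for the same data
  let test (x : Q) (n : ℕ) (t : (Fin (n + 1) → Q) → Q) (z u : Fin n → Q) : Prop :=
    S.IsTermOp t → (∀ i, β.r (z i) (u i)) → δ.r (t (Fin.cons x z)) (t (Fin.cons x u))
  have hle : sSup s ≤ Setoid.ker test := sSup_le fun α hα x y hxy => by
    funext n t z u
    exact propext ⟨fun h ht hzu => hs α hα n t ht x y hxy z u hzu (h ht hzu),
      fun h ht hzu => hs α hα n t ht y x (α.symm hxy) z u hzu (h ht hzu)⟩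
  intro n t ht x y hxy z u hzu hx
  have hx' : test x n t z u := fun _ _ => hx
  rw [Setoid.ker_def.1 (hle hxy)] at hx'
  exact hx' ht hzu

theorem centralizes_center : S.Centralizes S.center ⊤ ⊥ :=
  S.centralizes_sSup fun _ hβ => hβ.2

/-- Parametrised permutations that, with `P⁻¹`, act on term operations by term operations, also
after substituting terms for the parameters; words in the translations `L (a i)` are examples. -/
def termFamilies (n : ℕ) : Subgroup ((Fin n → Q) → Equiv.Perm Q) where
  carrier := {P | ∀ ⦃k : ℕ⦄ (u : Fin n → (Fin k → Q) → Q) (s : (Fin k → Q) → Q),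
    (∀ i, S.IsTermOp (u i)) → S.IsTermOp s →
      S.IsTermOp (fun v => P (fun i => u i v) (s v)) ∧
      S.IsTermOp (fun v => (P fun i => u i v)⁻¹ (s v))}
  one_mem' := fun _ _ _ _ hs => ⟨hs, hs⟩
  mul_mem' := fun hP hR _ u _ hu hs =>
    ⟨(hP u _ hu (hR u _ hu hs).1).1, (hR u _ hu (hP u _ hu hs).2).2⟩
  inv_mem' := fun hP _ u _ hu hs => by
    simpa only [Pi.inv_apply, inv_inv] using (hP u _ hu hs).symm

variable {S}

theorem Centralizes.mono_left {α α' β δ : Setoid Q}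
    (hC : S.Centralizes α β δ) (hle : α' ≤ α) : S.Centralizes α' β δ :=
  fun n t ht x y hxy => hC n t ht x y (hle hxy)

theorem L_mem_termFamilies {n : ℕ} (i : Fin n) : (fun v => S.L (v i)) ∈ S.termFamilies n :=
  fun _ _ _ hu hs => ⟨.mul (hu i) hs, .ldiv (hu i) hs⟩

theorem comp_mem_termFamilies {m n : ℕ} {P : (Fin m → Q) → Equiv.Perm Q}
    (hP : P ∈ S.termFamilies m) (σ : Fin m → Fin n) :
    (fun v => P (fun i => v (σ i))) ∈ S.termFamilies n :=
  fun _ u _ hu hs => hP (fun i => u (σ i)) _ (fun i => hu (σ i)) hs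

theorem append_mem_termFamilies {m n : ℕ} {P : (Fin m → Q) → Equiv.Perm Q}
    {R : (Fin n → Q) → Equiv.Perm Q} (hP : P ∈ S.termFamilies m) (hR : R ∈ S.termFamilies n) :
    (fun v => P (fun i => v (Fin.castAdd n i)) * R (fun i => v (Fin.natAdd m i))) ∈
      S.termFamilies (m + n) :=
  mul_mem (comp_mem_termFamilies hP _) (comp_mem_termFamilies hR _)

theorem isTermOp_apply_of_mem_termFamilies {n : ℕ} {P : (Fin n → Q) → Equiv.Perm Q}
    (hP : P ∈ S.termFamilies n) (j : Fin n) : S.IsTermOp (fun v => P v (v j)) :=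
  (hP (fun i v => v i) _ .proj (.proj j)).1

theorem exists_family_of_mem_closure {G : ∀ n, Subgroup ((Fin n → Q) → Equiv.Perm Q)}
    (hG : ∀ {m n} {P R}, P ∈ G m → R ∈ G n →
      (fun v => P (fun i => v (Fin.castAdd n i)) * R (fun i => v (Fin.natAdd m i))) ∈ G (m + n))
    {X : Set (Equiv.Perm Q)} (hX : ∀ g ∈ X, ∃ n, ∃ P ∈ G n, ∃ a, P a = g)
    {h : Equiv.Perm Q} (hh : h ∈ Subgroup.closure X) : ∃ n, ∃ P ∈ G n, ∃ a, P a = h := by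
  induction hh using Subgroup.closure_induction with
  | mem g hg => exact hX g hg
  | one => exact ⟨0, 1, one_mem _, Fin.elim0, rfl⟩
  | mul g₁ g₂ _ _ ih₁ ih₂ =>
    obtain ⟨m, P, hP, a, rfl⟩ := ih₁
    obtain ⟨n, R, hR, b, rfl⟩ := ih₂
    exact ⟨m + n, _, hG hP hR, Fin.append a b, by simp only [Fin.append_left, Fin.append_right]⟩
  | inv g _ ih =>
    obtain ⟨n, P, hP, a, rfl⟩ := ih
    exact ⟨n, P⁻¹, inv_mem hP, a, rfl⟩

/-- Words with exponent sum zero, such as the elements of `Dis(Q)`, give families in here. -/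
def diagKer (Q : Type*) (n : ℕ) : Subgroup ((Fin n → Q) → Equiv.Perm Q) :=
  ⨅ c : Q, (Pi.evalMonoidHom (fun _ => Equiv.Perm Q) fun _ => c).ker

theorem mem_diagKer {n : ℕ} {P : (Fin n → Q) → Equiv.Perm Q} :
    P ∈ diagKer Q n ↔ ∀ c, P (fun _ => c) = 1 := by
  simp only [diagKer, Subgroup.mem_iInf, MonoidHom.mem_ker, Pi.evalMonoidHom_apply]

theorem exists_termFamily_of_mem_LMlt {h : Equiv.Perm Q} (hh : h ∈ S.LMlt) :
    ∃ n, ∃ P ∈ S.termFamilies n, ∃ a, P a = h := by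
  refine exists_family_of_mem_closure append_mem_termFamilies ?_ hh
  rintro _ ⟨x, rfl⟩
  exact ⟨1, _, L_mem_termFamilies 0, fun _ => x, rfl⟩

theorem exists_termFamily_of_mem_Dis {h : Equiv.Perm Q} (hh : h ∈ S.Dis) :
    ∃ n, ∃ P ∈ S.termFamilies n ⊓ diagKer Q n, ∃ a, P a = h := by
  refine exists_family_of_mem_closure (G := fun n => S.termFamilies n ⊓ diagKer Q n)
    (fun hP hR => ⟨append_mem_termFamilies hP.1 hR.1, mem_diagKer.2 fun c => ?_⟩) ?_ hh
  · simp only [mem_diagKer.1 hP.2 c, mem_diagKer.1 hR.2 c, mul_one]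
  rintro _ ⟨x, y, rfl⟩
  refine ⟨2, fun v => S.L (v 0) * (S.L (v 1))⁻¹, Subgroup.mem_inf.2 ⟨?_, ?_⟩, ![x, y], rfl⟩
  · exact mul_mem (L_mem_termFamilies 0) (inv_mem (L_mem_termFamilies 1))
  · exact mem_diagKer.2 fun _ => mul_inv_cancel _

theorem Centralizes.apply_eq_of_apply_eq {α : Setoid Q} (hC : S.Centralizes α ⊤ ⊥) {n : ℕ}
    {P : (Fin (n + 1) → Q) → Equiv.Perm Q} (hP : P ∈ S.termFamilies (n + 1)) (j : Fin (n + 1))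
    {x y : Q} (hxy : α.r x y) (z u : Fin n → Q)
    (hx : P (Fin.cons x z) ((Fin.cons x z : Fin (n + 1) → Q) j) =
      P (Fin.cons x u) ((Fin.cons x u : Fin (n + 1) → Q) j)) :
    P (Fin.cons y z) ((Fin.cons y z : Fin (n + 1) → Q) j) =
      P (Fin.cons y u) ((Fin.cons y u : Fin (n + 1) → Q) j) :=
  hC n _ (isTermOp_apply_of_mem_termFamilies hP j) x y hxy z u (fun _ => trivial) hx

theorem Centralizes.apply_eq_self_of_apply_eq_self {α : Setoid Q} (hC : S.Centralizes α ⊤ ⊥)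
    {x y : Q} (hxy : α.r x y) {h : Equiv.Perm Q} (hh : h ∈ S.Dis) (hx : h x = x) : h y = y := by
  obtain ⟨n, P, hP, a, rfl⟩ := exists_termFamily_of_mem_Dis hh
  obtain ⟨hP, hPconst⟩ := Subgroup.mem_inf.1 hP
  have hconst := mem_diagKer.1 hPconst x
  have := hC.apply_eq_of_apply_eq (comp_mem_termFamilies hP Fin.succ) 0 hxy a (fun _ => x)
    (by simpa [hconst])
  simpa [hconst] using this

theorem Centralizes.commute {α : Setoid Q} (hC : S.Centralizes α ⊤ ⊥) {x y : Q}
    (hxy : α.r x y) {h k : Equiv.Perm Q} (hh : h ∈ S.LMlt) (hk : k ∈ S.Dis) :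
    Commute (h * (S.L x * (S.L y)⁻¹) * h⁻¹) k := by
  refine (inv_mul_eq_one.1 (Equiv.ext fun q => ?_)).symm
  obtain ⟨n, H, hH, a, rfl⟩ := exists_termFamily_of_mem_LMlt hh
  obtain ⟨m, K, hK, b, rfl⟩ := exists_termFamily_of_mem_Dis hk
  obtain ⟨hK, hKconst⟩ := Subgroup.mem_inf.1 hK
  -- the variables are `w, x, q`, then the parameters of `H`, then those of `K`
  let Hv : (Fin (n + m + 1 + 1 + 1) → Q) → Equiv.Perm Q :=
    fun v => H fun i => v (Fin.castAdd m i).succ.succ.succ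
  let Kv : (Fin (n + m + 1 + 1 + 1) → Q) → Equiv.Perm Q :=
    fun v => K fun i => v (Fin.natAdd n i).succ.succ.succ
  let G := fun v => Hv v * (S.L (v 1) * (S.L (v 0))⁻¹) * (Hv v)⁻¹
  have hHv : Hv ∈ S.termFamilies _ := comp_mem_termFamilies hH _
  have hG : G ∈ S.termFamilies _ :=
    mul_mem (mul_mem hHv (mul_mem (L_mem_termFamilies 1) (inv_mem (L_mem_termFamilies 0))))
      (inv_mem hHv)
  have hKv : Kv ∈ S.termFamilies _ := comp_mem_termFamilies hK _
  have hGK : (fun v => (Kv v * G v)⁻¹ * (G v * Kv v)) ∈ S.termFamilies _ :=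
    mul_mem (inv_mem (mul_mem hKv hG)) (mul_mem hG hKv)
  have cons_two {N : ℕ} (c : Q) (f : Fin (N + 2) → Q) :
      (Fin.cons c f : Fin (N + 3) → Q) 2 = f 1 := rfl
  -- the family is trivial at `w = x`, and at `w = y` once the parameters of `K` are all `x`
  have hcomm := hC.apply_eq_of_apply_eq hGK 2 hxy (Fin.cons x (Fin.cons q (Fin.append a b)))
    (Fin.cons x (Fin.cons q (Fin.append a fun _ => x))) (by simp [G, Hv, Kv, cons_two])
  simpa [G, Hv, Kv, cons_two, mem_diagKer.1 hKconst x] using hcomm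
end

theorem statement_18_general {Q : Type*} (S : LeftQuasigroup Q) (α : Setoid Q)
    (hle : α ≤ S.center) :
    (∀ h ∈ S.disRel α, ∀ k ∈ S.Dis, h * k = k * h) ∧
    ∀ x y : Q, α.r x y → ∀ h ∈ S.Dis, (h x = x ↔ h y = y) := by
  have hC : S.Centralizes α ⊤ ⊥ := S.centralizes_center.mono_left hle
  have hcentral : S.disRel α ≤ Subgroup.centralizer S.Dis := by
    refine Subgroup.closure_le _ |>.2 ?_
    rintro _ ⟨x, y, h, hxy, hh, rfl⟩
    exact Subgroup.mem_centralizer_iff.2 fun k hk => (hC.commute hxy hh hk).symm.eq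
  refine ⟨fun h hh k hk => (Subgroup.mem_centralizer_iff.1 (hcentral hh) k hk).symm,
    fun x y hxy h hh => ⟨?_, ?_⟩⟩
  · exact hC.apply_eq_self_of_apply_eq_self hxy hh
  · exact hC.apply_eq_self_of_apply_eq_self (α.symm hxy) hh

/-- If `α ≤ ζ_Q`, then `Dis_α` is central in `Dis(Q)` and `Dis(Q)_x = Dis(Q)_y`
whenever `x α y`. -/
theorem statement_18 {Q : Type*} (S : LeftQuasigroup Q) (α : Setoid Q)
    (hα : S.IsCongruence α) (hle : α ≤ S.center) :
    (∀ h ∈ S.disRel α, ∀ k ∈ S.Dis, h * k = k * h) ∧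
    ∀ x y : Q, α.r x y → ∀ h ∈ S.Dis, (h x = x ↔ h y = y) :=
  statement_18_general S α hle

end LeftQuasigroup

end PaperLQ
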